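/- arXiv:2103.08432 — 4 statements merged into one kernel-verified Lean document; each statement's English description precedes it below -/
import Mathlib

section
/- Let C1 = (V1,E1) and C2 = (V2,E2) be rigidity circuits such that V1 ∩ V2 = {u,v} and E1 ∩ E2 = {uv} (exactly one common edge, whose endpoints are exactly the common vertices). Then the 2-sum of C1 and C2, i.e. the graph with vertex set V1 ∪ V2 and edge set (E1 ∪ E2) \ {uv}, is a rigidity circuit. -/
/-- The two endpoints of an edge (an element of `Sym2 ℕ`), as a `Finset`. -/
def epts (e : Sym2 ℕ) : Finset ℕ :=
  Sym2.lift ⟨fun a b => ({a, b} : Finset ℕ), fun a b => Finset.pair_comm a b⟩ e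

/-- The vertex span of a set of edges: every vertex incident to at least one edge. -/
def verts (E : Finset (Sym2 ℕ)) : Finset ℕ := E.biUnion epts

/-- The edges of `E` spanned by a vertex subset `V`. -/
def spannedEdges (E : Finset (Sym2 ℕ)) (V : Finset ℕ) : Finset (Sym2 ℕ) :=
  E.filter fun e => epts e ⊆ V

/-- A rigidity circuit: a finite simple graph (edge set of non-loop edges, with vertex
set the set of vertices incident to at least one edge) with `|E| = 2|V| - 2` edges and
such that every proper vertex subset `V'` with `|V'| ≥ 2` spans at most `2|V'| - 3` edges. -/
def IsCircuit (E : Finset (Sym2 ℕ)) : Prop :=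
  (∀ e ∈ E, ¬ e.IsDiag) ∧
  E.card = 2 * (verts E).card - 2 ∧
  ∀ V' : Finset ℕ, V' ⊂ verts E → 2 ≤ V'.card →
    (spannedEdges E V').card ≤ 2 * V'.card - 3

lemma epts_mk (a b : ℕ) : epts s(a,b) = {a,b} := rfl

lemma epts_card {e : Sym2 ℕ} (h : ¬ e.IsDiag) : (epts e).card = 2 := by
  induction e using Sym2.ind with
  | _ a b =>
    rw [Sym2.mk_isDiag_iff] at h
    rw [epts_mk, Finset.card_pair h]

lemma epts_eq {e : Sym2 ℕ} {u v : ℕ} (huv : u ≠ v)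
    (h : epts e = ({u,v} : Finset ℕ)) : e = s(u,v) := by
  induction e using Sym2.ind with
  | _ a b =>
    rw [epts_mk] at h
    have ha : a ∈ ({u,v} : Finset ℕ) := by rw [← h]; simp
    have hv : v ∈ ({a,b} : Finset ℕ) := by rw [h]; simp
    have hu : u ∈ ({a,b} : Finset ℕ) := by rw [h]; simp
    simp only [Finset.mem_insert, Finset.mem_singleton] at ha hu hv
    rcases ha with rfl | rfl
    · rcases hv with rfl | rfl
      · exact absurd rfl huv
      · rfl
    · rcases hu with rfl | rfl
      · exact absurd rfl huv
      · exact Sym2.eq_swap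

lemma mem_verts {x : ℕ} {E : Finset (Sym2 ℕ)} :
    x ∈ verts E ↔ ∃ e ∈ E, x ∈ epts e := Finset.mem_biUnion

lemma epts_subset {e : Sym2 ℕ} {E : Finset (Sym2 ℕ)} (h : e ∈ E) : epts e ⊆ verts E :=
  fun x hx => Finset.mem_biUnion.2 ⟨e, h, hx⟩

lemma spanned_subset (E : Finset (Sym2 ℕ)) (V : Finset ℕ) : spannedEdges E V ⊆ E :=
  Finset.filter_subset _ _

lemma mem_spanned {e : Sym2 ℕ} {E : Finset (Sym2 ℕ)} {V : Finset ℕ} :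
    e ∈ spannedEdges E V ↔ e ∈ E ∧ epts e ⊆ V := Finset.mem_filter

lemma spanned_verts (E : Finset (Sym2 ℕ)) : spannedEdges E (verts E) = E := by
  apply Finset.filter_true_of_mem; intro e he; exact epts_subset he

lemma spanned_small {E : Finset (Sym2 ℕ)} {W : Finset ℕ}
    (hD : ∀ e ∈ E, ¬ e.IsDiag) (hW : W.card ≤ 1) : spannedEdges E W = ∅ := by
  ext e
  simp only [mem_spanned, Finset.notMem_empty, iff_false, not_and]
  intro he hsub
  have := Finset.card_le_card hsub
  rw [epts_card (hD e he)] at this; omega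

/-- Key counting lemma: bounds on the number of spanned edges other than `uv`. -/
lemma key_bound {F : Finset (Sym2 ℕ)} {u v : ℕ} (hF : IsCircuit F) (huvF : s(u,v) ∈ F)
    {W : Finset ℕ} (hW : W ⊆ verts F) :
    ((spannedEdges F W).erase s(u,v)).card ≤ 2 * W.card - 3 ∧
    (W ⊂ verts F → u ∈ W → v ∈ W →
      ((spannedEdges F W).erase s(u,v)).card ≤ 2 * W.card - 4) := by
  obtain ⟨hD, hcard, hsparse⟩ := hF
  by_cases h1 : W.card ≤ 1
  · rw [spanned_small hD h1, Finset.erase_empty, Finset.card_empty]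
    exact ⟨Nat.zero_le _, fun _ _ _ => Nat.zero_le _⟩
  · push_neg at h1
    by_cases hss : W ⊂ verts F
    · have hs := hsparse W hss h1
      have he : ((spannedEdges F W).erase s(u,v)).card ≤ (spannedEdges F W).card :=
        Finset.card_le_card (Finset.erase_subset _ _)
      refine ⟨le_trans he hs, fun _ hu hv => ?_⟩
      have hmem : s(u,v) ∈ spannedEdges F W := by
        rw [mem_spanned, epts_mk]
        exact ⟨huvF, by intro x hx; simp at hx; rcases hx with rfl | rfl <;> assumption⟩
      rw [Finset.card_erase_of_mem hmem]
      omega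
    · have heq : W = verts F := by
        rcases hW.eq_or_ssubset with h | h
        · exact h
        · exact absurd h hss
      subst heq
      rw [spanned_verts, Finset.card_erase_of_mem huvF, hcard]
      exact ⟨by omega, fun h => absurd h hss⟩

/-- In a circuit containing the edge `uv`, the vertex `u` has another incident edge. -/
lemma exists_other_edge {F : Finset (Sym2 ℕ)} {u v : ℕ} (huv : u ≠ v) (hF : IsCircuit F)
    (huvF : s(u,v) ∈ F) : ∃ e ∈ F, e ≠ s(u,v) ∧ u ∈ epts e := by
  obtain ⟨hD, hcard, hsparse⟩ := hF
  have huV : u ∈ verts F := epts_subset huvF (by rw [epts_mk]; simp)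
  have hvV : v ∈ verts F := epts_subset huvF (by rw [epts_mk]; simp)
  by_contra hcon
  push_neg at hcon
  have hpair : ({u, v} : Finset ℕ) ⊆ verts F := by
    intro x hx; simp at hx; rcases hx with rfl | rfl <;> assumption
  have h2 : 2 ≤ (verts F).card := by
    calc 2 = ({u,v} : Finset ℕ).card := (Finset.card_pair huv).symm
    _ ≤ _ := Finset.card_le_card hpair
  by_cases h3 : (verts F).card ≤ 2
  · -- verts F = {u, v}, so F = {s(u,v)} but |F| = 2
    have heq : ({u,v} : Finset ℕ) = verts F :=
      Finset.eq_of_subset_of_card_le hpair (by rw [Finset.card_pair huv]; exact h3)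
    have hFsub : F ⊆ {s(u,v)} := by
      intro e he
      have h1 : epts e ⊆ ({u,v} : Finset ℕ) := heq ▸ epts_subset he
      have h2 : epts e = ({u,v} : Finset ℕ) :=
        Finset.eq_of_subset_of_card_le h1
          (by rw [epts_card (hD e he), Finset.card_pair huv])
      simp [epts_eq huv h2]
    have := Finset.card_le_card hFsub
    rw [Finset.card_singleton] at this
    rw [hcard, ← heq, Finset.card_pair huv] at this
    omega
  · push_neg at h3
    set W := (verts F).erase u with hWdef
    have hWss : W ⊂ verts F := Finset.erase_ssubset huV
    have hWcard : W.card = (verts F).card - 1 := Finset.card_erase_of_mem huV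
    have hsub : F.erase s(u,v) ⊆ spannedEdges F W := by
      intro e he
      rw [Finset.mem_erase] at he
      rw [mem_spanned]
      refine ⟨he.2, fun x hx => Finset.mem_erase.2 ⟨?_, epts_subset he.2 hx⟩⟩
      rintro rfl
      exact hcon e he.2 he.1 hx
    have h4 := hsparse W hWss (by omega)
    have h5 := Finset.card_le_card hsub
    rw [Finset.card_erase_of_mem huvF, hcard] at h5
    omega

/-- Any vertex of a circuit containing `uv` is incident to an edge other than `uv`. -/
lemma exists_edge_ne {F : Finset (Sym2 ℕ)} {u v : ℕ} (huv : u ≠ v) (hF : IsCircuit F)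
    (huvF : s(u,v) ∈ F) {x : ℕ} (hx : x ∈ verts F) :
    ∃ e ∈ F, e ≠ s(u,v) ∧ x ∈ epts e := by
  obtain ⟨e, he, hxe⟩ := mem_verts.1 hx
  by_cases heq : e = s(u,v)
  · subst heq
    rw [epts_mk] at hxe
    simp only [Finset.mem_insert, Finset.mem_singleton] at hxe
    rcases hxe with rfl | rfl
    · exact exists_other_edge huv hF huvF
    · have : s(x, u) ∈ F := Sym2.eq_swap ▸ huvF
      obtain ⟨e', he', hne, hxe'⟩ := exists_other_edge huv.symm hF this
      exact ⟨e', he', by rwa [← Sym2.eq_swap] at hne, hxe'⟩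
  · exact ⟨e, he, heq, hxe⟩


/-- If `C1 = (V1,E1)` and `C2 = (V2,E2)` are rigidity circuits with
`V1 ∩ V2 = {u,v}` and `E1 ∩ E2 = {uv}`, then their 2-sum, the graph with vertex set
`V1 ∪ V2` and edge set `(E1 ∪ E2) \ {uv}`, is a rigidity circuit. -/
theorem two_sum_of_circuits_is_circuit
    (E1 E2 : Finset (Sym2 ℕ)) (u v : ℕ) (huv : u ≠ v)
    (hC1 : IsCircuit E1) (hC2 : IsCircuit E2)
    (hV : verts E1 ∩ verts E2 = {u, v})
    (hE : E1 ∩ E2 = {s(u, v)}) :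
    verts ((E1 ∪ E2).erase s(u, v)) = verts E1 ∪ verts E2 ∧
    IsCircuit ((E1 ∪ E2).erase s(u, v)) := by
  set E : Finset (Sym2 ℕ) := (E1 ∪ E2).erase s(u,v) with hEdef
  have huv1 : s(u,v) ∈ E1 := by
    have : s(u,v) ∈ E1 ∩ E2 := by rw [hE]; exact Finset.mem_singleton_self _
    exact (Finset.mem_inter.1 this).1
  have huv2 : s(u,v) ∈ E2 := by
    have : s(u,v) ∈ E1 ∩ E2 := by rw [hE]; exact Finset.mem_singleton_self _
    exact (Finset.mem_inter.1 this).2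
  -- the vertex set
  have hverts : verts E = verts E1 ∪ verts E2 := by
    apply Finset.Subset.antisymm
    · intro x hx
      obtain ⟨e, he, hxe⟩ := mem_verts.1 hx
      have he' : e ∈ E1 ∪ E2 := Finset.mem_of_mem_erase he
      rcases Finset.mem_union.1 he' with h | h
      · exact Finset.mem_union_left _ (epts_subset h hxe)
      · exact Finset.mem_union_right _ (epts_subset h hxe)
    · intro x hx
      rcases Finset.mem_union.1 hx with h | h
      · obtain ⟨e, he, hne, hxe⟩ := exists_edge_ne huv hC1 huv1 h
        exact mem_verts.2 ⟨e, Finset.mem_erase.2 ⟨hne, Finset.mem_union_left _ he⟩, hxe⟩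
      · obtain ⟨e, he, hne, hxe⟩ := exists_edge_ne huv hC2 huv2 h
        exact mem_verts.2 ⟨e, Finset.mem_erase.2 ⟨hne, Finset.mem_union_right _ he⟩, hxe⟩
  refine ⟨hverts, ?_, ?_, ?_⟩
  -- no loops
  · intro e he
    rcases Finset.mem_union.1 (Finset.mem_of_mem_erase he) with h | h
    · exact hC1.1 e h
    · exact hC2.1 e h
  -- edge count
  · have hpair1 : ({u, v} : Finset ℕ) ⊆ verts E1 := by
      rw [← hV]; exact Finset.inter_subset_left
    have hpair2 : ({u, v} : Finset ℕ) ⊆ verts E2 := by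
      rw [← hV]; exact Finset.inter_subset_right
    have hn1 : 2 ≤ (verts E1).card :=
      (Finset.card_pair huv) ▸ Finset.card_le_card hpair1
    have hn2 : 2 ≤ (verts E2).card :=
      (Finset.card_pair huv) ▸ Finset.card_le_card hpair2
    have hVU : (verts E1 ∪ verts E2).card + 2 = (verts E1).card + (verts E2).card := by
      have := Finset.card_union_add_card_inter (verts E1) (verts E2)
      rw [hV, Finset.card_pair huv] at this
      exact this
    have hEU : (E1 ∪ E2).card + 1 = E1.card + E2.card := by
      have := Finset.card_union_add_card_inter E1 E2
      rw [hE, Finset.card_singleton] at this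
      exact this
    have hEcard : E.card = (E1 ∪ E2).card - 1 :=
      Finset.card_erase_of_mem (Finset.mem_union_left _ huv1)
    have h1 := hC1.2.1
    have h2 := hC2.2.1
    rw [hverts, hEcard]
    omega
  -- sparsity
  · intro V' hV' hV'2
    rw [hverts] at hV'
    set A := V' ∩ verts E1 with hAdef
    set B := V' ∩ verts E2 with hBdef
    have hAsub : A ⊆ verts E1 := Finset.inter_subset_right
    have hBsub : B ⊆ verts E2 := Finset.inter_subset_right
    have hAV' : A ⊆ V' := Finset.inter_subset_left
    have hBV' : B ⊆ V' := Finset.inter_subset_left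
    have hABunion : A ∪ B = V' := by
      rw [hAdef, hBdef, ← Finset.inter_union_distrib_left]
      exact Finset.inter_eq_left.2 hV'.subset
    have hABinter : A ∩ B = V' ∩ {u, v} := by
      rw [hAdef, hBdef, ← hV]
      ext x; simp only [Finset.mem_inter]; tauto
    have hcardAB : A.card + B.card = V'.card + (V' ∩ ({u,v} : Finset ℕ)).card := by
      have := Finset.card_union_add_card_inter A B
      rw [hABunion, hABinter] at this
      omega
    have hkA : (V' ∩ ({u,v} : Finset ℕ)).card ≤ A.card :=
      hABinter ▸ Finset.card_le_card Finset.inter_subset_left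
    have hkB : (V' ∩ ({u,v} : Finset ℕ)).card ≤ B.card :=
      hABinter ▸ Finset.card_le_card Finset.inter_subset_right
    have haV : A.card ≤ V'.card := Finset.card_le_card hAV'
    have hbV : B.card ≤ V'.card := Finset.card_le_card hBV'
    -- the spanned edges split into the two sides
    have hsplit : spannedEdges E V' ⊆
        (spannedEdges E1 A).erase s(u,v) ∪ (spannedEdges E2 B).erase s(u,v) := by
      intro e he
      rw [mem_spanned] at he
      obtain ⟨heE, hesub⟩ := he
      rw [Finset.mem_erase] at heE
      obtain ⟨hne, heU⟩ := heE
      rcases Finset.mem_union.1 heU with h | h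
      · refine Finset.mem_union_left _ (Finset.mem_erase.2 ⟨hne, mem_spanned.2 ⟨h, ?_⟩⟩)
        intro x hx
        exact Finset.mem_inter.2 ⟨hesub hx, epts_subset h hx⟩
      · refine Finset.mem_union_right _ (Finset.mem_erase.2 ⟨hne, mem_spanned.2 ⟨h, ?_⟩⟩)
        intro x hx
        exact Finset.mem_inter.2 ⟨hesub hx, epts_subset h hx⟩
    have hdisj : Disjoint ((spannedEdges E1 A).erase s(u,v))
        ((spannedEdges E2 B).erase s(u,v)) := by
      rw [Finset.disjoint_left]
      intro e he1 he2
      rw [Finset.mem_erase, mem_spanned] at he1 he2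
      have : e ∈ E1 ∩ E2 := Finset.mem_inter.2 ⟨he1.2.1, he2.2.1⟩
      rw [hE, Finset.mem_singleton] at this
      exact he1.1 this
    have hle : (spannedEdges E V').card ≤
        ((spannedEdges E1 A).erase s(u,v)).card + ((spannedEdges E2 B).erase s(u,v)).card := by
      calc (spannedEdges E V').card ≤ _ := Finset.card_le_card hsplit
        _ = _ := Finset.card_union_of_disjoint hdisj
    have hkey1 := key_bound hC1 huv1 hAsub
    have hkey2 := key_bound hC2 huv2 hBsub
    by_cases hboth : u ∈ V' ∧ v ∈ V'
    · obtain ⟨hu, hv⟩ := hboth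
      have hu1 : u ∈ verts E1 := epts_subset huv1 (by rw [epts_mk]; simp)
      have hv1 : v ∈ verts E1 := epts_subset huv1 (by rw [epts_mk]; simp)
      have hu2 : u ∈ verts E2 := epts_subset huv2 (by rw [epts_mk]; simp)
      have hv2 : v ∈ verts E2 := epts_subset huv2 (by rw [epts_mk]; simp)
      have huA : u ∈ A := Finset.mem_inter.2 ⟨hu, hu1⟩
      have hvA : v ∈ A := Finset.mem_inter.2 ⟨hv, hv1⟩
      have huB : u ∈ B := Finset.mem_inter.2 ⟨hu, hu2⟩
      have hvB : v ∈ B := Finset.mem_inter.2 ⟨hv, hv2⟩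
      have ha2 : 2 ≤ A.card := by
        have : ({u,v} : Finset ℕ) ⊆ A := by
          intro x hx; simp only [Finset.mem_insert, Finset.mem_singleton] at hx
          rcases hx with rfl | rfl <;> assumption
        calc 2 = ({u,v} : Finset ℕ).card := (Finset.card_pair huv).symm
          _ ≤ _ := Finset.card_le_card this
      have hb2 : 2 ≤ B.card := by
        have : ({u,v} : Finset ℕ) ⊆ B := by
          intro x hx; simp only [Finset.mem_insert, Finset.mem_singleton] at hx
          rcases hx with rfl | rfl <;> assumption
        calc 2 = ({u,v} : Finset ℕ).card := (Finset.card_pair huv).symm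
          _ ≤ _ := Finset.card_le_card this
      have hk2 : (V' ∩ ({u,v} : Finset ℕ)).card = 2 := by
        have heq : V' ∩ ({u,v} : Finset ℕ) = {u,v} := by
          apply Finset.inter_eq_right.2
          intro x hx; simp only [Finset.mem_insert, Finset.mem_singleton] at hx
          rcases hx with rfl | rfl <;> assumption
        rw [heq, Finset.card_pair huv]
      have hnotboth : A ⊂ verts E1 ∨ B ⊂ verts E2 := by
        by_contra hc
        push_neg at hc
        have hA : A = verts E1 := by
          rcases hAsub.eq_or_ssubset with h | h
          · exact h
          · exact absurd h hc.1
        have hB : B = verts E2 := by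
          rcases hBsub.eq_or_ssubset with h | h
          · exact h
          · exact absurd h hc.2
        rw [hA, hB] at hABunion
        exact (ne_of_ssubset hV') hABunion.symm
      rcases hnotboth with hA | hB
      · have g1 := hkey1.2 hA huA hvA
        have g2 := hkey2.1
        omega
      · have g1 := hkey1.1
        have g2 := hkey2.2 hB huB hvB
        omega
    · -- at most one of u, v in V'
      have hk1 : (V' ∩ ({u,v} : Finset ℕ)).card ≤ 1 := by
        rcases not_and_or.1 hboth with h | h
        · refine Finset.card_le_one.2 fun x hx y hy => ?_
          simp only [Finset.mem_inter, Finset.mem_insert, Finset.mem_singleton] at hx hy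
          rcases hx.2 with rfl | rfl
          · exact absurd hx.1 h
          · rcases hy.2 with rfl | rfl
            · exact absurd hy.1 h
            · rfl
        · refine Finset.card_le_one.2 fun x hx y hy => ?_
          simp only [Finset.mem_inter, Finset.mem_insert, Finset.mem_singleton] at hx hy
          rcases hx.2 with rfl | rfl
          · rcases hy.2 with rfl | rfl
            · rfl
            · exact absurd hy.1 h
          · exact absurd hx.1 h
      have g1 := hkey1.1
      have g2 := hkey2.1
      omega
end

section
/- Let C1 = (V1,E1) and C2 = (V2,E2) be rigidity circuits with neither edge set contained in the other, and let e ∈ E1 ∩ E2 be a common edge. The combinatorial resultant CRes(C1,C2,e), which has n = |V1 ∪ V2| vertices, has exactly 2n − 2 edges if and only if the common subgraph (V1 ∩ V2, E1 ∩ E2) is a Laman graph. -/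
/-- A `(2,3)`-sparse and tight (Laman) graph on the vertex set `V` with edge set `E`. -/
def IsLaman (V : Finset ℕ) (E : Finset (Sym2 ℕ)) : Prop :=
  (∀ e ∈ E, ¬ e.IsDiag) ∧ verts E ⊆ V ∧
  E.card = 2 * V.card - 3 ∧
  ∀ V' : Finset ℕ, V' ⊆ V → 2 ≤ V'.card →
    (spannedEdges E V').card ≤ 2 * V'.card - 3

lemma epts_subset_verts {E : Finset (Sym2 ℕ)} {f : Sym2 ℕ} (h : f ∈ E) :
    epts f ⊆ verts E := Finset.subset_biUnion_of_mem epts h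

lemma card_epts {f : Sym2 ℕ} (h : ¬ f.IsDiag) : (epts f).card = 2 := by
  induction f using Sym2.ind with
  | _ a b =>
    rw [Sym2.isDiag_iff_proj_eq] at h
    simp only [epts, Sym2.lift_mk]
    exact Finset.card_pair h

lemma verts_inter_subset (E1 E2 : Finset (Sym2 ℕ)) :
    verts (E1 ∩ E2) ⊆ verts E1 ∩ verts E2 := by
  intro v hv
  obtain ⟨f, hf, hv⟩ := Finset.mem_biUnion.mp hv
  obtain ⟨hf1, hf2⟩ := Finset.mem_inter.mp hf
  exact Finset.mem_inter.mpr ⟨epts_subset_verts hf1 hv, epts_subset_verts hf2 hv⟩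

/-- For rigidity circuits `C1`, `C2` with neither edge set contained in the
other and a common edge `e`, the combinatorial resultant `CRes(C1,C2,e)` (with vertex set
`V1 ∪ V2`, `n` vertices, and edge set `(E1 ∪ E2) \ {e}`) has exactly `2n - 2` edges iff the
common subgraph `(V1 ∩ V2, E1 ∩ E2)` is Laman. -/
theorem combRes_card_iff_laman
    (E1 E2 : Finset (Sym2 ℕ))
    (hC1 : IsCircuit E1) (hC2 : IsCircuit E2)
    (h12 : ¬ E1 ⊆ E2) (h21 : ¬ E2 ⊆ E1)
    (e : Sym2 ℕ) (he : e ∈ E1 ∩ E2) :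
    ((E1 ∪ E2).erase e).card = 2 * (verts E1 ∪ verts E2).card - 2 ↔
      IsLaman (verts E1 ∩ verts E2) (E1 ∩ E2) := by
  obtain ⟨he1, he2⟩ := Finset.mem_inter.mp he
  have hnd : ¬ e.IsDiag := hC1.1 e he1
  have hec : (epts e).card = 2 := card_epts hnd
  have hsub1 : epts e ⊆ verts E1 := epts_subset_verts he1
  have hsub2 : epts e ⊆ verts E2 := epts_subset_verts he2
  have hsubI : epts e ⊆ verts E1 ∩ verts E2 := Finset.subset_inter hsub1 hsub2
  have ha2 : 2 ≤ (verts E1 ∩ verts E2).card := hec ▸ Finset.card_le_card hsubI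
  have hn1 : 2 ≤ (verts E1).card := hec ▸ Finset.card_le_card hsub1
  have hn2 : 2 ≤ (verts E2).card := hec ▸ Finset.card_le_card hsub2
  have hm1 : E1.card = 2 * (verts E1).card - 2 := hC1.2.1
  have hm2 : E2.card = 2 * (verts E2).card - 2 := hC2.2.1
  have hue : (E1 ∪ E2).card + (E1 ∩ E2).card = E1.card + E2.card :=
    Finset.card_union_add_card_inter _ _
  have her : ((E1 ∪ E2).erase e).card = (E1 ∪ E2).card - 1 :=
    Finset.card_erase_of_mem (Finset.mem_union_left _ he1)
  have he0 : 1 ≤ (E1 ∪ E2).card :=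
    Finset.card_pos.mpr ⟨e, Finset.mem_union_left _ he1⟩
  have huv : (verts E1 ∪ verts E2).card + (verts E1 ∩ verts E2).card
      = (verts E1).card + (verts E2).card :=
    Finset.card_union_add_card_inter _ _
  have hka : (E1 ∩ E2).card ≤ E1.card :=
    Finset.card_le_card Finset.inter_subset_left
  have hav1 : (verts E1 ∩ verts E2).card ≤ (verts E1).card :=
    Finset.card_le_card Finset.inter_subset_left
  have hav2 : (verts E1 ∩ verts E2).card ≤ (verts E2).card :=
    Finset.card_le_card Finset.inter_subset_right
  have key : ((E1 ∪ E2).erase e).card = 2 * (verts E1 ∪ verts E2).card - 2 ↔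
      (E1 ∩ E2).card + 3 = 2 * (verts E1 ∩ verts E2).card := by omega
  rw [key]
  constructor
  · intro hk
    refine ⟨fun f hf => hC1.1 f (Finset.mem_inter.mp hf).1,
      verts_inter_subset E1 E2, by omega, ?_⟩
    intro V' hV' hV'2
    have hmono1 : spannedEdges (E1 ∩ E2) V' ⊆ spannedEdges E1 V' :=
      Finset.filter_subset_filter _ Finset.inter_subset_left
    have hmono2 : spannedEdges (E1 ∩ E2) V' ⊆ spannedEdges E2 V' :=
      Finset.filter_subset_filter _ Finset.inter_subset_right
    have hV'1 : V' ⊆ verts E1 := hV'.trans Finset.inter_subset_left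
    have hV'2' : V' ⊆ verts E2 := hV'.trans Finset.inter_subset_right
    by_cases h1 : V' = verts E1
    · by_cases h2 : V' = verts E2
      · have hV'I : V' = verts E1 ∩ verts E2 := by
          refine Finset.Subset.antisymm hV' ?_
          rw [← h1]; exact Finset.inter_subset_left
        have hall : spannedEdges (E1 ∩ E2) V' = E1 ∩ E2 := by
          refine Finset.filter_true_of_mem fun f hf => ?_
          rw [hV'I]
          obtain ⟨hf1, hf2⟩ := Finset.mem_inter.mp hf
          exact Finset.subset_inter (epts_subset_verts hf1) (epts_subset_verts hf2)
        rw [hall]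
        have : V'.card = (verts E1 ∩ verts E2).card := by rw [hV'I]
        omega
      · exact le_trans (Finset.card_le_card hmono2)
          (hC2.2.2 V' (Finset.ssubset_iff_subset_ne.mpr ⟨hV'2', h2⟩) hV'2)
    · exact le_trans (Finset.card_le_card hmono1)
        (hC1.2.2 V' (Finset.ssubset_iff_subset_ne.mpr ⟨hV'1, h1⟩) hV'2)
  · intro hL
    have hcard := hL.2.2.1
    omega
end

section
/- Let k be a field and let f, g ∈ k[y_1,…,y_t][x] be polynomials with deg_x f = r, deg_x g = s and r + s ≥ 1, such that f and g, viewed as polynomials in the variables y_1,…,y_t,x, are homogeneous of total degrees m and n respectively (so m ≥ r and n ≥ s). If Res(f,g,x) ≠ 0, then Res(f,g,x) is a homogeneous polynomial in k[y_1,…,y_t] of total degree m·s + n·r − r·s. -/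
/-!
Give the variables `y` integer weights `1`. Entry `(i, j)` of the Sylvester matrix is a coefficient
of `x^(i + r - j)` in `f` or of `x^(i - j)` in `g`, hence homogeneous of degree `c i - i + j` with
`c i = m - r` on the `s` rows of `f` and `c i = n` on the `r` rows of `g`. Every term
`± ∏ M (τ i) i` of the determinant is then homogeneous of degree `∑ c i = s (m - r) + r n`.
Degrees are taken in `ℤ` because `c i - i + j` is negative outside the band, where the entries
are `0`.
-/

open Polynomial

/-- The `(r+s) × (r+s)` Sylvester matrix of `f` and `g` (viewed as having degrees `r`
and `s`): the first `s` rows carry the shifted coefficient vectors of `f`, the last `r`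
rows carry the shifted coefficient vectors of `g`. -/
noncomputable def sylvester {R : Type*} [CommRing R] (f g : R[X]) (r s : ℕ) :
    Matrix (Fin (r + s)) (Fin (r + s)) R :=
  Matrix.of fun i j =>
    if (i : ℕ) < s then
      (if (i : ℕ) ≤ (j : ℕ) ∧ (j : ℕ) ≤ (i : ℕ) + r then f.coeff ((i : ℕ) + r - (j : ℕ)) else 0)
    else
      (if (i : ℕ) - s ≤ (j : ℕ) ∧ (j : ℕ) ≤ ((i : ℕ) - s) + s then
        g.coeff (((i : ℕ) - s) + s - (j : ℕ)) else 0)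

/-- The resultant `Res(f, g, x)` of two univariate polynomials over `R`, with respect to
their degrees in `x`: the determinant of the Sylvester matrix. -/
noncomputable def res {R : Type*} [CommRing R] (f g : R[X]) : R :=
  (_root_.sylvester f g f.natDegree g.natDegree).det

namespace MvPolynomial

open Finsupp

variable {σ R : Type*}

theorem weight_one_int_eq_cast (d : σ →₀ ℕ) :
    weight (1 : σ → ℤ) d = (weight (1 : σ → ℕ) d : ℤ) := by
  simp [weight_apply, Finsupp.sum]

theorem isHomogeneous_iff_isWeightedHomogeneous_int [CommSemiring R] {φ : MvPolynomial σ R}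
    {n : ℕ} : φ.IsHomogeneous n ↔ IsWeightedHomogeneous (1 : σ → ℤ) φ n := by
  simp only [IsHomogeneous, IsWeightedHomogeneous, weight_one_int_eq_cast, Nat.cast_inj]

theorem IsHomogeneous.coeff_isWeightedHomogeneous_int_of_optionEquivLeft_symm [CommSemiring R]
    [Finite σ] {p : Polynomial (MvPolynomial σ R)} {n : ℕ}
    (hp : ((optionEquivLeft R σ).symm p).IsHomogeneous n) {i : ℕ} (hi : i ≤ n) :
    IsWeightedHomogeneous (1 : σ → ℤ) (p.coeff i) ((n : ℤ) - i) := by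
  rw [← Nat.cast_sub hi, ← isHomogeneous_iff_isWeightedHomogeneous_int]
  exact hp.coeff_isHomogeneous_of_optionEquivLeft_symm i (n - i) (by omega)

end MvPolynomial

open MvPolynomial

theorem Matrix.det_isWeightedHomogeneous {σ R M ι : Type*} [CommRing R] [AddCommMonoid M]
    [Fintype ι] [DecidableEq ι] {w : σ → M} (A : Matrix ι ι (MvPolynomial σ R)) (a b : ι → M)
    (hA : ∀ i j, IsWeightedHomogeneous w (A i j) (a i + b j)) :
    IsWeightedHomogeneous w A.det (∑ i, a i + ∑ j, b j) := by
  rw [det_apply]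
  refine IsWeightedHomogeneous.sum _ _ _ fun τ _ => ?_
  have hprod := IsWeightedHomogeneous.prod Finset.univ (fun i => A (τ i) i)
    (fun i => a (τ i) + b i) fun i _ => hA (τ i) i
  rw [Finset.sum_add_distrib, Equiv.sum_comp τ a] at hprod
  rw [Units.smul_def]
  exact (mem_weightedHomogeneousSubmodule R w _ _).mp
    (zsmul_mem ((mem_weightedHomogeneousSubmodule R w _ _).mpr hprod) _)

theorem Fin.sum_ite_val_lt {M : Type*} [AddCommMonoid M] (r s : ℕ) (u v : M) :
    ∑ i : Fin (r + s), (if (i : ℕ) < s then u else v) = s • u + r • v := by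
  rw [Fin.sum_univ_eq_sum_range (fun i => if i < s then u else v), add_comm, Finset.sum_range_add]
  simp [Finset.sum_ite_of_true]

theorem sylvester_det_isWeightedHomogeneous {σ R : Type*} [CommRing R] {w : σ → ℤ}
    (f g : (MvPolynomial σ R)[X]) (r s : ℕ) (m n : ℤ)
    (hf : ∀ k ≤ r, IsWeightedHomogeneous w (f.coeff k) (m - k))
    (hg : ∀ k ≤ s, IsWeightedHomogeneous w (g.coeff k) (n - k)) :
    IsWeightedHomogeneous w (_root_.sylvester f g r s).det (m * s + n * r - r * s) := by
  set a : Fin (r + s) → ℤ := fun i => (if (i : ℕ) < s then m - r else n) - i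
  have hdeg : ∑ i, a i + ∑ j : Fin (r + s), (j : ℤ) = m * s + n * r - r * s := by
    rw [← Finset.sum_add_distrib]
    simp only [a, sub_add_cancel, Fin.sum_ite_val_lt, nsmul_eq_mul]
    ring
  rw [← hdeg]
  refine Matrix.det_isWeightedHomogeneous _ a _ fun i j => ?_
  simp only [_root_.sylvester, Matrix.of_apply, a]
  split_ifs
  · convert hf ((i : ℕ) + r - j) (by omega) using 1
    omega
  · exact isWeightedHomogeneous_zero _ _ _
  · convert hg ((i : ℕ) - s + s - j) (by omega) using 1
    omega
  · exact isWeightedHomogeneous_zero _ _ _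

theorem resultant_of_homogeneous_isHomogeneous_general
    {k : Type*} [Field k] (t : ℕ) (m n r s : ℕ)
    (hmr : r ≤ m) (hns : s ≤ n)
    (f g : Polynomial (MvPolynomial (Fin t) k))
    (hr : f.natDegree = r) (hs : g.natDegree = s)
    (hf : (((MvPolynomial.optionEquivLeft k (Fin t)).symm f)).IsHomogeneous m)
    (hg : (((MvPolynomial.optionEquivLeft k (Fin t)).symm g)).IsHomogeneous n) :
    (res f g).IsHomogeneous (m * s + n * r - r * s) := by
  subst hr hs
  have hdeg : f.natDegree * g.natDegree ≤ m * g.natDegree + n * f.natDegree :=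
    (Nat.mul_le_mul_right _ hmr).trans (Nat.le_add_right _ _)
  rw [isHomogeneous_iff_isWeightedHomogeneous_int, Nat.cast_sub hdeg]
  push_cast
  exact sylvester_det_isWeightedHomogeneous f g _ _ m n
    (fun i hi => hf.coeff_isWeightedHomogeneous_int_of_optionEquivLeft_symm (hi.trans hmr))
    (fun i hi => hg.coeff_isWeightedHomogeneous_int_of_optionEquivLeft_symm (hi.trans hns))

/-- Let `k` be a field and `f, g ∈ k[y_1,…,y_t][x]` with `deg_x f = r`,
`deg_x g = s`, `r + s ≥ 1`, such that `f` and `g`, viewed as polynomials in `y_1,…,y_t,x`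
(via the algebra isomorphism `k[y_1,…,y_t,x] ≃ k[y_1,…,y_t][x]`), are homogeneous of total
degrees `m` and `n` respectively (so `m ≥ r`, `n ≥ s`). If `Res(f,g,x) ≠ 0` then it is
homogeneous of total degree `m·s + n·r − r·s` in `k[y_1,…,y_t]`. -/
theorem resultant_of_homogeneous_isHomogeneous
    {k : Type*} [Field k] (t : ℕ) (m n r s : ℕ) (hrs : 1 ≤ r + s)
    (hmr : r ≤ m) (hns : s ≤ n)
    (f g : Polynomial (MvPolynomial (Fin t) k))
    (hr : f.natDegree = r) (hs : g.natDegree = s)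
    (hf : (((MvPolynomial.optionEquivLeft k (Fin t)).symm f)).IsHomogeneous m)
    (hg : (((MvPolynomial.optionEquivLeft k (Fin t)).symm g)).IsHomogeneous n)
    (hres : res f g ≠ 0) :
    (res f g).IsHomogeneous (m * s + n * r - r * s) :=
  resultant_of_homogeneous_isHomogeneous_general t m n r s hmr hns f g hr hs hf hg
end

section
/- Let I be a prime ideal of Q[x_1,…,x_N] and let C ⊆ {x_1,…,x_N} be a circuit of I, i.e. a subset minimal under inclusion with I ∩ Q[C] ≠ {0}. Then the elimination ideal I ∩ Q[C] is a principal ideal generated by a polynomial p_C that is irreducible over Q and whose support is exactly C; moreover p_C is unique up to multiplication by a nonzero rational constant. -/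
/-!
Restrict `I` to `ℚ[C]`: by minimality every nonzero element of `P = I ∩ ℚ[C]` involves every
variable of `C`. Single out one such variable `x`, so that `ℚ[C] = A[x]` with `P ∩ A = 0`. A prime
element `γ ∈ P` then has positive degree in `x`, so it is primitive and, by Gauss's lemma,
irreducible over `Frac A`. If `γ ∤ h` for some `h ∈ P`, then `γ` and `h` are coprime over `Frac A`,
and clearing denominators in a Bézout identity puts a nonzero element of `A` into `P`. Hence
`P = (γ)`, and the generator is unique up to a unit of `ℚ[C]`, i.e. a nonzero constant.
-/

open MvPolynomial
open scoped nonZeroDivisors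

theorem associated_of_forall_iff_exists_mul {M : Type*} [CommMonoidWithZero M]
    [IsLeftCancelMulZero M] {Φ S : M → Prop} (hS : S 1) {p p' : M}
    (hp : ∀ f, Φ f ↔ ∃ q, S q ∧ f = q * p) (hp' : ∀ f, Φ f ↔ ∃ q, S q ∧ f = q * p') :
    Associated p p' := by
  obtain ⟨q, -, hq⟩ := (hp p').1 ((hp' p').2 ⟨1, hS, (one_mul p').symm⟩)
  obtain ⟨q', -, hq'⟩ := (hp' p).1 ((hp p).2 ⟨1, hS, (one_mul p).symm⟩)
  exact associated_of_dvd_dvd (Dvd.intro_left q hq.symm) (Dvd.intro_left q' hq'.symm)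

namespace Polynomial

open IsLocalization in
theorem exists_C_mem_of_isCoprime_map {R K : Type*} [CommRing R] [Field K] [Algebra R K]
    [IsFractionRing R K] {P : Ideal R[X]} {f g : R[X]} (hf : f ∈ P) (hg : g ∈ P)
    (hfg : IsCoprime (f.map (algebraMap R K)) (g.map (algebraMap R K))) :
    ∃ r ∈ R⁰, C r ∈ P := by
  obtain ⟨a, b, hab⟩ := hfg
  obtain ⟨sa, hsa, ha⟩ := integerNormalization_spec R⁰ a
  obtain ⟨sb, hsb, hb⟩ := integerNormalization_spec R⁰ b
  have hcleared : C sb * integerNormalization R⁰ a * f + C sa * integerNormalization R⁰ b * g =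
      C (sa * sb) := by
    apply map_injective _ (IsFractionRing.injective R K)
    simp only [Polynomial.map_add, Polynomial.map_mul, map_C, ha, hb, Algebra.smul_def,
      ← Polynomial.algebraMap_apply, map_mul]
    linear_combination (algebraMap R K[X] sa * algebraMap R K[X] sb) * hab
  refine ⟨sa * sb, mul_mem hsa hsb, ?_⟩
  rw [← hcleared]
  exact P.add_mem (P.mul_mem_left _ hf) (P.mul_mem_left _ hg)

theorem eq_span_singleton_of_comap_C_eq_bot {R : Type*} [CommRing R] [IsDomain R] [IsGCDMonoid R]
    {P : Ideal R[X]} (hP : P.comap C = ⊥) {γ : R[X]} (hγP : γ ∈ P) (hγ : Irreducible γ) :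
    P = Ideal.span {γ} := by
  have hC : ∀ r, C r ∈ P → r = 0 := fun r hr => by
    simpa [hP] using (Ideal.mem_comap.2 hr : r ∈ P.comap C)
  have hdeg : γ.natDegree ≠ 0 := fun h => hγ.ne_zero <| by
    rw [eq_C_of_natDegree_eq_zero h] at hγP ⊢
    rw [hC _ hγP, C_0]
  have hprim := hγ.isPrimitive hdeg
  set K := FractionRing R
  have hγK : Irreducible (γ.map (algebraMap R K)) :=
    hprim.irreducible_iff_irreducible_map_fraction_map.1 hγ
  refine le_antisymm (fun h hh => Ideal.mem_span_singleton.2 ?_) (Ideal.span_le.2 (by simpa))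
  refine hprim.dvd_of_fraction_map_dvd_fraction_map (K := K) (not_not.1 fun hnd => ?_)
  obtain ⟨r, hr, hrP⟩ := exists_C_mem_of_isCoprime_map hγP hh (hγK.coprime_iff_not_dvd.2 hnd)
  exact nonZeroDivisors.ne_zero hr (hC r hrP)

end Polynomial

namespace MvPolynomial

variable {σ R : Type*} [CommRing R]

theorem exists_irreducible_eq_span_singleton_of_forall_mem_vars [IsDomain R]
    [UniqueFactorizationMonoid R] {P : Ideal (MvPolynomial σ R)} (hprime : P.IsPrime)
    (hP : P ≠ ⊥) (x : σ) (hx : ∀ f ∈ P, f ≠ 0 → x ∈ f.vars) :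
    ∃ g, Irreducible g ∧ P = Ideal.span {g} := by
  classical
  obtain ⟨g, hgP, hg⟩ := hprime.exists_mem_prime_of_ne_bot hP
  refine ⟨g, hg.irreducible, ?_⟩
  -- The splitting of `x` for which `degreeOf_eq_natDegree` holds.
  let e : MvPolynomial σ R ≃ₐ[R] Polynomial (MvPolynomial {y // y ≠ x} R) :=
    (renameEquiv R (Equiv.optionSubtypeNe x).symm).trans (optionEquivLeft R _)
  have hmem : ∀ f, e f ∈ P.comap e.symm ↔ f ∈ P := fun f => by
    rw [Ideal.mem_comap, AlgEquiv.symm_apply_apply]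
  have hC : (P.comap e.symm).comap Polynomial.C = ⊥ := by
    refine eq_bot_iff.2 fun a ha => ?_
    have hdeg : degreeOf x (e.symm (Polynomial.C a)) = 0 := by
      rw [degreeOf_eq_natDegree]
      exact (congrArg Polynomial.natDegree (e.apply_symm_apply _)).trans (Polynomial.natDegree_C a)
    by_contra ha0
    exact (mem_vars_iff_degreeOf_ne_zero.1 (hx _ ha
      (by simpa using ha0 : e.symm (Polynomial.C a) ≠ 0))) hdeg
  have hspan := Polynomial.eq_span_singleton_of_comap_C_eq_bot hC ((hmem g).2 hgP)
    (hg.irreducible.map e)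
  ext f
  rw [Ideal.mem_span_singleton, ← map_dvd_iff e, ← Ideal.mem_span_singleton, ← hspan, hmem]

theorem vars_nonempty_of_mem_of_ne_top {K : Type*} [Field K] {I : Ideal (MvPolynomial σ K)}
    (hI : I ≠ ⊤) {f : MvPolynomial σ K} (hfI : f ∈ I) (hf : f ≠ 0) : f.vars.Nonempty := by
  rw [Finset.nonempty_iff_ne_empty, Ne, vars_eq_empty_iff_eq_C]
  intro hfC
  refine hI (I.eq_top_of_isUnit_mem hfI ?_)
  rw [hfC] at hf ⊢
  exact (isUnit_iff_ne_zero.2 fun h => hf (by rw [h, C_0])).map C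

theorem exists_C_mul_eq_of_associated {K : Type*} [Field K] {p p' : MvPolynomial σ K}
    (h : Associated p p') : ∃ c : K, c ≠ 0 ∧ p' = C c * p := by
  obtain ⟨u, rfl⟩ := h
  obtain ⟨c, hc, hu⟩ := isUnit_iff_eq_C_of_isReduced.1 u.isUnit
  exact ⟨c, hc.ne_zero, by rw [hu, mul_comm]⟩

theorem vars_rename_val_subset {s : Set σ} (g : MvPolynomial s R) :
    ↑(rename (Subtype.val : s → σ) g).vars ⊆ s :=
  mem_supported.1 (supported_eq_range_rename (R := R) s ▸ ⟨g, rfl⟩)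

section Elimination

variable {I : Ideal (MvPolynomial σ R)}

theorem comap_rename_ne_bot {s : Set σ} {f : MvPolynomial σ R} (hfI : f ∈ I) (hf : f ≠ 0)
    (hfs : ↑f.vars ⊆ s) : I.comap (rename (Subtype.val : s → σ)) ≠ ⊥ := by
  obtain ⟨f₀, rfl⟩ := exists_rename_eq_of_vars_subset_range f (Subtype.val : s → σ)
    Subtype.val_injective (by rwa [Subtype.range_coe])
  exact fun h => hf (by simpa [h] using (Ideal.mem_comap.2 hfI : f₀ ∈ I.comap (rename _)))

theorem mem_and_vars_subset_iff_of_comap_rename_eq_span {s : Set σ} {g : MvPolynomial s R}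
    (hg : I.comap (rename ((↑) : s → σ)) = Ideal.span {g}) (f : MvPolynomial σ R) :
    (f ∈ I ∧ ↑f.vars ⊆ s) ↔ ∃ q : MvPolynomial σ R, ↑q.vars ⊆ s ∧ f = q * rename (↑) g := by
  have hrange : ∀ h : MvPolynomial σ R, ↑h.vars ⊆ s ↔ ∃ h₀ : MvPolynomial s R, rename (↑) h₀ = h :=
    fun h => by rw [← mem_supported, supported_eq_range_rename, AlgHom.mem_range]
  simp only [hrange]
  constructor
  · rintro ⟨hfI, f₀, rfl⟩
    have hf₀ : f₀ ∈ I.comap (rename (↑)) := Ideal.mem_comap.2 hfI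
    rw [hg, Ideal.mem_span_singleton'] at hf₀
    obtain ⟨q₀, rfl⟩ := hf₀
    exact ⟨rename Subtype.val q₀, ⟨q₀, rfl⟩, map_mul (rename Subtype.val) q₀ g⟩
  · rintro ⟨_, ⟨q₀, rfl⟩, rfl⟩
    have hgI : g ∈ I.comap (rename (↑)) := hg ▸ Ideal.mem_span_singleton_self g
    exact ⟨I.mul_mem_left _ (Ideal.mem_comap.1 hgI), q₀ * g, map_mul (rename Subtype.val) q₀ g⟩

variable {C : Finset σ}

theorem vars_eq_of_minimal
    (hmin : ∀ C' : Finset σ, C' ⊂ C → ∀ f ∈ I, ↑f.vars ⊆ (C' : Set σ) → f = 0)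
    {f : MvPolynomial σ R} (hfI : f ∈ I) (hf : f ≠ 0) (hfC : ↑f.vars ⊆ (C : Set σ)) : f.vars = C :=
  by_contra fun hne =>
    hf (hmin _ (Finset.ssubset_iff_subset_ne.2 ⟨Finset.coe_subset.1 hfC, hne⟩) f hfI subset_rfl)

theorem mem_vars_of_mem_comap_rename_of_minimal
    (hmin : ∀ C' : Finset σ, C' ⊂ C → ∀ f ∈ I, ↑f.vars ⊆ (C' : Set σ) → f = 0)
    {g : MvPolynomial (C : Set σ) R}
    (hgI : g ∈ I.comap (rename Subtype.val)) (hg : g ≠ 0) (x : (C : Set σ)) : x ∈ g.vars := by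
  have hg' : rename Subtype.val g ≠ 0 :=
    (map_ne_zero_iff _ (rename_injective _ Subtype.val_injective)).2 hg
  have hx : x.val ∈ (rename Subtype.val g).vars := by
    rw [vars_eq_of_minimal hmin hgI hg' (vars_rename_val_subset g)]
    exact x.2
  obtain ⟨y, hy, hyx⟩ := mem_vars_rename _ g hx
  exact Subtype.ext hyx ▸ hy

end Elimination

end MvPolynomial

/-- Let `I` be a prime ideal of `ℚ[x_1,…,x_N]` and `C` a circuit of its
algebraic matroid, i.e. a subset of the variables minimal under inclusion such that the
elimination ideal `I ∩ ℚ[C]` is nonzero.  Then `I ∩ ℚ[C]` is principal, generated by a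
polynomial `p_C` irreducible over `ℚ` whose support (set of variables) is exactly `C`;
moreover `p_C` is unique up to multiplication by a nonzero rational constant. -/
theorem circuit_polynomial_principal
    (N : ℕ) (I : Ideal (MvPolynomial (Fin N) ℚ)) (hI : I.IsPrime)
    (C : Finset (Fin N))
    (hdep : ∃ f ∈ I, f ≠ 0 ∧ (f.vars : Set (Fin N)) ⊆ ↑C)
    (hmin : ∀ C' : Finset (Fin N), C' ⊂ C →
      ∀ f ∈ I, (f.vars : Set (Fin N)) ⊆ ↑C' → f = 0) :
    ∃ p : MvPolynomial (Fin N) ℚ,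
      Irreducible p ∧ p.vars = C ∧
      (∀ f : MvPolynomial (Fin N) ℚ,
        (f ∈ I ∧ (f.vars : Set (Fin N)) ⊆ ↑C) ↔
        (∃ q : MvPolynomial (Fin N) ℚ, (q.vars : Set (Fin N)) ⊆ ↑C ∧ f = q * p)) ∧
      (∀ p' : MvPolynomial (Fin N) ℚ,
        (∀ f : MvPolynomial (Fin N) ℚ,
          (f ∈ I ∧ (f.vars : Set (Fin N)) ⊆ ↑C) ↔
          (∃ q : MvPolynomial (Fin N) ℚ, (q.vars : Set (Fin N)) ⊆ ↑C ∧ f = q * p')) →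
        ∃ c : ℚ, c ≠ 0 ∧ p' = MvPolynomial.C c * p) := by
  obtain ⟨f, hfI, hf, hfC⟩ := hdep
  obtain ⟨x, hx⟩ := vars_nonempty_of_mem_of_ne_top hI.ne_top hfI hf
  obtain ⟨g, hg, hPg⟩ := exists_irreducible_eq_span_singleton_of_forall_mem_vars (hI.comap _)
    (comap_rename_ne_bot hfI hf hfC) ⟨x, hfC hx⟩
    fun g hgP hg0 => mem_vars_of_mem_comap_rename_of_minimal hmin hgP hg0 _
  have hiff := mem_and_vars_subset_iff_of_comap_rename_eq_span hPg
  have hp : Irreducible (rename Subtype.val g) := ((prime_rename_iff _).2 hg.prime).irreducible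
  have hpI := ((hiff _).2 ⟨1, by simp, (one_mul _).symm⟩).1
  refine ⟨_, hp, vars_eq_of_minimal hmin hpI hp.ne_zero (vars_rename_val_subset g), hiff,
    fun p' hp' => ?_⟩
  exact exists_C_mul_eq_of_associated (associated_of_forall_iff_exists_mul (by simp) hiff hp')
end
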